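/- arXiv:2301.08931 — 10 statements merged into one kernel-verified Lean document; each statement's English description precedes it below -/
import Mathlib

section
/- For every real number r with 0 < r < 1, the equation (1 - r)·e^{-h} + e^{-(1-r)h} - r = 0 has a unique solution h in the interval (0, ∞). -/
open Filter

theorem stmt_0 (r : ℝ) (hr0 : 0 < r) (hr1 : r < 1) :
    ∃! h : ℝ, 0 < h ∧
      (1 - r) * Real.exp (-h) + Real.exp (-(1 - r) * h) - r = 0 := by
  set f : ℝ → ℝ := fun h => (1 - r) * Real.exp (-h) + Real.exp (-(1 - r) * h) - r with hf
  have hr1' : 0 < 1 - r := by linarith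
  have hderiv : ∀ x : ℝ, HasDerivAt f
      ((1 - r) * (Real.exp (-x) * (-1)) + Real.exp (-(1 - r) * x) * (-(1 - r))) x := by
    intro x
    have h1 : HasDerivAt (fun h : ℝ => Real.exp (-h)) (Real.exp (-x) * (-1)) x :=
      (Real.hasDerivAt_exp (-x)).comp x (hasDerivAt_id x).neg
    have h2 : HasDerivAt (fun h : ℝ => Real.exp (-(1 - r) * h))
        (Real.exp (-(1 - r) * x) * (-(1 - r))) x := by
      have hl : HasDerivAt (fun h : ℝ => -(1 - r) * h) (-(1 - r)) x := by
        simpa using (hasDerivAt_id x).const_mul (-(1 - r))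
      exact (Real.hasDerivAt_exp (-(1 - r) * x)).comp x hl
    exact ((h1.const_mul (1 - r)).add h2).sub_const r
  have hanti : StrictAnti f := by
    apply strictAnti_of_deriv_neg
    intro x
    rw [(hderiv x).deriv]
    have e1 := Real.exp_pos (-x)
    have e2 := Real.exp_pos (-(1 - r) * x)
    nlinarith
  have hcont : Continuous f := by
    fun_prop
  have hf0 : f 0 = 2 - 2 * r := by simp [hf]; ring
  have hf0pos : 0 < f 0 := by rw [hf0]; linarith
  -- f tends to -r at infinity
  have ht : Tendsto f atTop (nhds (-r)) := by
    have t1 : Tendsto (fun h : ℝ => (1 - r) * Real.exp (-h)) atTop (nhds 0) := by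
      simpa using (Real.tendsto_exp_neg_atTop_nhds_zero).const_mul (1 - r)
    have t2 : Tendsto (fun h : ℝ => Real.exp (-(1 - r) * h)) atTop (nhds 0) := by
      apply Real.tendsto_exp_atBot.comp
      have h3 : Tendsto (fun h : ℝ => (1 - r) * h) atTop atTop :=
        tendsto_id.const_mul_atTop hr1'
      exact (tendsto_neg_atTop_atBot.comp h3).congr fun x => (neg_mul _ _).symm
    have h4 := (t1.add t2).sub_const r
    simpa only [zero_add, zero_sub] using h4
  obtain ⟨b, hb0, hbneg⟩ : ∃ b : ℝ, 0 < b ∧ f b < 0 := by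
    have : ∀ᶠ x in atTop, f x < 0 := ht.eventually_lt_const (by linarith)
    obtain ⟨b, hb1, hb2⟩ := ((eventually_gt_atTop (0 : ℝ)).and this).exists
    exact ⟨b, hb1, hb2⟩
  obtain ⟨c, hc, hfc⟩ : ∃ c ∈ Set.Icc (0 : ℝ) b, f c = 0 := by
    have hsub := intermediate_value_Icc' hb0.le hcont.continuousOn
    have : (0 : ℝ) ∈ Set.Icc (f b) (f 0) := ⟨hbneg.le, hf0pos.le⟩
    obtain ⟨c, hc, hfc⟩ := hsub this
    exact ⟨c, hc, hfc⟩
  have hcpos : 0 < c := by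
    rcases hc.1.lt_or_eq with h | h
    · exact h
    · exfalso; rw [← h] at hfc; linarith
  refine ⟨c, ⟨hcpos, hfc⟩, ?_⟩
  rintro y ⟨-, hy⟩
  exact hanti.injective (hy.trans hfc.symm)
end

section
/- Let 0 < r < 1 and let h_r be the unique solution in (0, ∞) of (1 - r)·e^{-h} + e^{-(1-r)h} = r. Then the function h ↦ (1 + e^{-r h})/(1 + e^{-h}) on (0, ∞) attains its maximum value r·e^{(1-r)h_r} at h = h_r, and this is the unique maximizer. -/
/-!
Substituting `u = exp h`, the inequality `(1 + exp (-r h)) / (1 + exp (-h)) ≤ M` becomes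
`u ^ (1 - r) ≤ (M - 1) u + M`. The map `u ↦ u ^ (1 - r)` is strictly concave, and the defining
equation of `h_r` says exactly that, for `M = r exp ((1 - r) h_r)`, this line is its tangent at
`u = exp h_r`. So the inequality holds, with equality only at `h = h_r`.
-/

open Real

lemma exp_mul_lt_of_ne_zero {p t : ℝ} (hp0 : 0 < p) (hp1 : p < 1) (ht : t ≠ 0) :
    exp (p * t) < p * exp t + (1 - p) := by
  simpa using strictConvexOn_exp.2 (Set.mem_univ t) (Set.mem_univ 0) ht hp0 (sub_pos.2 hp1)
    (add_sub_cancel p 1)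

/-- The tangent-line inequality for `u ↦ u ^ (1 - r)` at `u = exp a`, divided by `u = exp h`. -/
lemma exp_neg_mul_lt_tangent {r a h : ℝ} (hr0 : 0 < r) (hr1 : r < 1) (hne : h ≠ a) :
    exp (-r * h) < (1 - r) * exp (-r * a) + r * exp ((1 - r) * a) * exp (-h) := by
  have hconv := exp_mul_lt_of_ne_zero (sub_pos.2 hr1) (by linarith : 1 - r < 1) (sub_ne_zero.2 hne)
  have hscale : 0 < exp ((1 - r) * a - h) := exp_pos _
  calc exp (-r * h) = exp ((1 - r) * (h - a)) * exp ((1 - r) * a - h) := by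
        rw [← exp_add]; ring_nf
    _ < ((1 - r) * exp (h - a) + (1 - (1 - r))) * exp ((1 - r) * a - h) :=
        mul_lt_mul_of_pos_right hconv hscale
    _ = (1 - r) * exp (-r * a) + r * exp ((1 - r) * a) * exp (-h) := by
        rw [add_mul, mul_assoc, ← exp_add, mul_assoc r, ← exp_add]; ring_nf

theorem stmt_1_general (r hr : ℝ) (hr0 : 0 < r) (hr1 : r < 1)
    (heq : (1 - r) * Real.exp (-hr) + Real.exp (-(1 - r) * hr) = r) :
    (1 + Real.exp (-r * hr)) / (1 + Real.exp (-hr)) = r * Real.exp ((1 - r) * hr) ∧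
    ∀ h : ℝ, 0 < h → h ≠ hr →
      (1 + Real.exp (-r * h)) / (1 + Real.exp (-h)) < r * Real.exp ((1 - r) * hr) := by
  set M := r * exp ((1 - r) * hr)
  have hM : 1 + (1 - r) * exp (-r * hr) = M := by
    have h1 : exp (-hr) * exp ((1 - r) * hr) = exp (-r * hr) := by rw [← exp_add]; ring_nf
    have h2 : exp (-(1 - r) * hr) * exp ((1 - r) * hr) = 1 := by rw [← exp_add, ← exp_zero]; ring_nf
    linear_combination exp ((1 - r) * hr) * heq - (1 - r) * h1 - h2
  have hden : ∀ h : ℝ, 0 < 1 + exp (-h) := fun h => by positivity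
  refine ⟨?_, fun h _ hne => ?_⟩
  · have h3 : M * exp (-hr) = r * exp (-r * hr) := by
      rw [mul_assoc, ← exp_add]; ring_nf
    rw [div_eq_iff (hden hr).ne']
    linear_combination hM - h3
  · rw [div_lt_iff₀ (hden h)]
    linarith [exp_neg_mul_lt_tangent (a := hr) hr0 hr1 hne]

theorem stmt_1 (r hr : ℝ) (hr0 : 0 < r) (hr1 : r < 1) (hhr : 0 < hr)
    (heq : (1 - r) * Real.exp (-hr) + Real.exp (-(1 - r) * hr) = r) :
    (1 + Real.exp (-r * hr)) / (1 + Real.exp (-hr)) = r * Real.exp ((1 - r) * hr) ∧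
    ∀ h : ℝ, 0 < h → h ≠ hr →
      (1 + Real.exp (-r * h)) / (1 + Real.exp (-h)) < r * Real.exp ((1 - r) * hr) :=
  stmt_1_general r hr hr0 hr1 heq
end

section
/- Let 0 < r < 1 and let h_r be the unique positive solution of (1 - r)·e^{-h} + e^{-(1-r)h} = r. Then (1 - r/2)·log((2-r)/r)/(1-r) < h_r < log((2-r)/r)/(1-r). -/
theorem stmt_2 (r hr : ℝ) (hr0 : 0 < r) (hr1 : r < 1) (hhr : 0 < hr)
    (heq : (1 - r) * Real.exp (-hr) + Real.exp (-(1 - r) * hr) = r) :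
    (1 - r / 2) * Real.log ((2 - r) / r) / (1 - r) < hr ∧
    hr < Real.log ((2 - r) / r) / (1 - r) := by
  have h1r : (0:ℝ) < 1 - r := by linarith
  have h2r : (0:ℝ) < 2 - r := by linarith
  set K := Real.log ((2 - r) / r) with hKdef
  have hz : 1 < (2 - r) / r := by rw [lt_div_iff₀ hr0]; linarith
  have hKpos : 0 < K := Real.log_pos hz
  have hexpK : Real.exp (-K) = r / (2 - r) := by
    rw [Real.exp_neg, hKdef, Real.exp_log (by positivity)]
    rw [inv_div]
  constructor
  · -- lower bound
    by_contra h
    push_neg at h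
    set l := (1 - r / 2) * K / (1 - r) with hl
    -- value of G at l exceeds r
    have e1 : Real.exp (-(1 - r) * l) = (r / (2 - r)) * Real.exp (r / 2 * K) := by
      rw [← hexpK, ← Real.exp_add]
      congr 1
      rw [hl]; field_simp; ring
    have e2 : Real.exp (-l) = (r / (2 - r)) * Real.exp (-(r * K / (2 * (1 - r)))) := by
      rw [← hexpK, ← Real.exp_add]
      congr 1
      rw [hl]; field_simp; ring
    have b1 : 1 + r / 2 * K < Real.exp (r / 2 * K) := by
      have := Real.add_one_lt_exp (x := r / 2 * K) (by positivity)
      linarith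
    have b2 : 1 - r * K / (2 * (1 - r)) < Real.exp (-(r * K / (2 * (1 - r)))) := by
      have hne : -(r * K / (2 * (1 - r))) ≠ 0 := by
        have : 0 < r * K / (2 * (1 - r)) := by positivity
        linarith
      have := Real.add_one_lt_exp hne
      linarith
    have key : r < (1 - r) * Real.exp (-l) + Real.exp (-(1 - r) * l) := by
      rw [e1, e2]
      have hpos : 0 < r / (2 - r) := by positivity
      have h1 : (1 - r) * ((r / (2 - r)) * Real.exp (-(r * K / (2 * (1 - r)))))
          > (1 - r) * ((r / (2 - r)) * (1 - r * K / (2 * (1 - r)))) := by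
        apply mul_lt_mul_of_pos_left _ h1r
        exact mul_lt_mul_of_pos_left b2 hpos
      have h2 : (r / (2 - r)) * Real.exp (r / 2 * K)
          > (r / (2 - r)) * (1 + r / 2 * K) := mul_lt_mul_of_pos_left b1 hpos
      have halg : (1 - r) * ((r / (2 - r)) * (1 - r * K / (2 * (1 - r))))
          + (r / (2 - r)) * (1 + r / 2 * K) = r := by
        field_simp
        ring
      linarith
    -- monotonicity: hr ≤ l gives G(hr) ≥ G(l)
    have m1 : Real.exp (-l) ≤ Real.exp (-hr) := Real.exp_le_exp.2 (by linarith)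
    have m2 : Real.exp (-(1 - r) * l) ≤ Real.exp (-(1 - r) * hr) := by
      apply Real.exp_le_exp.2
      nlinarith
    nlinarith [mul_le_mul_of_nonneg_left m1 h1r.le]
  · -- upper bound
    by_contra h
    push_neg at h
    set L := K / (1 - r) with hL
    have e1 : Real.exp (-(1 - r) * L) = r / (2 - r) := by
      rw [← hexpK]
      congr 1
      rw [hL]; field_simp
    have e2 : Real.exp (-L) < r / (2 - r) := by
      rw [← hexpK]
      apply Real.exp_lt_exp.2
      rw [hL, neg_lt_neg_iff, lt_div_iff₀ h1r]
      nlinarith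
    have key : (1 - r) * Real.exp (-L) + Real.exp (-(1 - r) * L) < r := by
      rw [e1]
      have : (1 - r) * Real.exp (-L) < (1 - r) * (r / (2 - r)) :=
        mul_lt_mul_of_pos_left e2 h1r
      have halg : (1 - r) * (r / (2 - r)) + r / (2 - r) = r := by
        field_simp; ring
      linarith
    have m1 : Real.exp (-hr) ≤ Real.exp (-L) := Real.exp_le_exp.2 (by linarith)
    have m2 : Real.exp (-(1 - r) * hr) ≤ Real.exp (-(1 - r) * L) := by
      apply Real.exp_le_exp.2
      nlinarith
    nlinarith [mul_le_mul_of_nonneg_left m1 h1r.le]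
end

section
/- Let 0 < r < 1 and let h_r be the unique positive solution of (1 - r)·e^{-h} + e^{-(1-r)h} = r. Let W₀(e^{-1}) denote the principal branch of the Lambert W function evaluated at e^{-1}, i.e., the unique w > 0 with w·e^w = e^{-1}. Then 1 + W₀(e^{-1}) < h_r < (1 + W₀(e^{-1}))/r. -/
/-!
`F(h) = (1 - r) e^{-h} + e^{-(1-r)h}` is strictly decreasing, so it suffices to show
`F(1 + w) > r > F((1 + w) / r)`. The defining equation of `w` says `e^{-(1+w)} = w`, and with it
each of these two comparisons becomes `1 + x < e^x`, for `x = -(1 - r)(1 + w)` and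
`x = (1 - r)(1 + w) / r` respectively.
-/

open Real

noncomputable def expMix (r h : ℝ) : ℝ :=
  (1 - r) * exp (-h) + exp (-(1 - r) * h)

lemma strictAnti_expMix {r : ℝ} (hr : r < 1) : StrictAnti (expMix r) := by
  intro a b hab
  have hpos : 0 ≤ 1 - r := by linarith
  have hexp : exp (-(1 - r) * b) < exp (-(1 - r) * a) := exp_lt_exp.2 (by nlinarith)
  unfold expMix
  gcongr

lemma exp_neg_one_add_of_mul_exp_eq {w : ℝ} (hw : w * exp w = exp (-1)) :
    exp (-(1 + w)) = w := by
  rw [neg_add, exp_add, ← hw, mul_assoc, ← exp_add, add_neg_cancel, exp_zero, mul_one]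

lemma lt_expMix_one_add {r w : ℝ} (hw : exp (-(1 + w)) = w) (hw1 : 1 + w ≠ 0)
    (hr : r < 1) : r < expMix r (1 + w) := by
  have hx : -(1 - r) * (1 + w) ≠ 0 := mul_ne_zero (by linarith) hw1
  have key := add_one_lt_exp hx
  unfold expMix
  rw [hw]
  linear_combination key

lemma expMix_one_add_div_lt {r w : ℝ} (hw : exp (-(1 + w)) = w) (hw1 : 1 + w ≠ 0)
    (hr0 : 0 < r) (hr1 : r < 1) : expMix r ((1 + w) / r) < r := by
  set x := (1 - r) * (1 + w) / r with hx_def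
  have hx : x ≠ 0 := div_ne_zero (mul_ne_zero (by linarith) hw1) hr0.ne'
  have hexp_div : exp (-((1 + w) / r)) = w * exp (-x) := by
    calc exp (-((1 + w) / r)) = exp (-(1 + w) + -x) := by
          rw [hx_def]
          congr 1
          field_simp
          ring
      _ = w * exp (-x) := by rw [exp_add, hw]
  have hexp_mul_div : exp (-(1 - r) * ((1 + w) / r)) = exp (-x) := by
    congr 1
    ring
  have key : (1 - r) * w + 1 < r * exp x :=
    calc (1 - r) * w + 1 = r * (x + 1) := by
          rw [hx_def]
          field_simp
          ring
      _ < r * exp x := mul_lt_mul_of_pos_left (add_one_lt_exp hx) hr0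
  calc expMix r ((1 + w) / r) = exp (-x) * ((1 - r) * w + 1) := by
        unfold expMix
        rw [hexp_div, hexp_mul_div]
        ring
    _ < exp (-x) * (r * exp x) := mul_lt_mul_of_pos_left key (exp_pos _)
    _ = r := by rw [mul_left_comm, ← exp_add, neg_add_cancel, exp_zero, mul_one]

theorem stmt_3_general (r hr w : ℝ) (hr0 : 0 < r) (hr1 : r < 1)
    (heq : (1 - r) * Real.exp (-hr) + Real.exp (-(1 - r) * hr) = r)
    (hw0 : 0 < w) (hwe : w * Real.exp w = Real.exp (-1)) :
    1 + w < hr ∧ hr < (1 + w) / r := by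
  have hF : expMix r hr = r := heq
  have hw := exp_neg_one_add_of_mul_exp_eq hwe
  have hw1 : 1 + w ≠ 0 := by positivity
  have hanti := strictAnti_expMix hr1
  constructor
  · exact hanti.lt_iff_gt.mp (hF.trans_lt (lt_expMix_one_add hw hw1 hr1))
  · exact hanti.lt_iff_gt.mp ((expMix_one_add_div_lt hw hw1 hr0 hr1).trans_eq hF.symm)

theorem stmt_3 (r hr w : ℝ) (hr0 : 0 < r) (hr1 : r < 1) (hhr : 0 < hr)
    (heq : (1 - r) * Real.exp (-hr) + Real.exp (-(1 - r) * hr) = r)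
    (hw0 : 0 < w) (hwe : w * Real.exp w = Real.exp (-1)) :
    1 + w < hr ∧ hr < (1 + w) / r :=
  stmt_3_general r hr w hr0 hr1 heq hw0 hwe
end

section
/- Let 0 < r < 1, let h_r be the unique positive solution of (1-r)e^{-h} + e^{-(1-r)h} = r, and let W₀(e^{-1}) be the unique w > 0 with w·e^w = e^{-1}. Then h_r tends to 1 + W₀(e^{-1}) as r tends to 1 from below. -/
theorem stmt_4 (h : ℝ → ℝ) (w : ℝ) (hw0 : 0 < w) (hwe : w * Real.exp w = Real.exp (-1))
    (hh : ∀ r ∈ Set.Ioo (0:ℝ) 1, 0 < h r ∧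
      (1 - r) * Real.exp (-(h r)) + Real.exp (-(1 - r) * h r) = r) :
    Filter.Tendsto h (nhdsWithin 1 (Set.Ioo 0 1)) (nhds (1 + w)) := by
  have hwexp : Real.exp (-(1 + w)) = w := by
    rw [show (-(1+w)) = (-1) + (-w) by ring, Real.exp_add, ← hwe, mul_assoc, ← Real.exp_add]
    simp
  have hlow : ∀ r ∈ Set.Ioo (0:ℝ) 1, 1 + w < h r := by
    intro r hr
    obtain ⟨hr0, hr1⟩ := hr
    obtain ⟨hpos, heq⟩ := hh r ⟨hr0, hr1⟩
    by_contra hcon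
    push_neg at hcon
    have hs : 0 < 1 - r := by linarith
    have ht : 0 < (1 - r) * (1 + w) := by positivity
    have hf : r < (1 - r) * Real.exp (-(1 + w)) + Real.exp (-(1 - r) * (1 + w)) := by
      rw [hwexp]
      have hx := Real.add_one_lt_exp (x := -(1-r)*(1+w)) (by nlinarith)
      nlinarith [hx]
    have h1 : Real.exp (-(1 + w)) ≤ Real.exp (-(h r)) := Real.exp_le_exp.2 (by linarith)
    have h2 : Real.exp (-(1 - r) * (1 + w)) ≤ Real.exp (-(1 - r) * h r) :=
      Real.exp_le_exp.2 (by nlinarith)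
    nlinarith
  have hup : ∀ r ∈ Set.Ioo (0:ℝ) 1, h r < (1 + w) / r := by
    intro r hr
    obtain ⟨hr0, hr1⟩ := hr
    obtain ⟨hpos, heq⟩ := hh r ⟨hr0, hr1⟩
    by_contra hcon
    push_neg at hcon
    have hs : 0 < 1 - r := by linarith
    set b := (1 + w) / r with hb
    set t := (1 - r) * (1 + w) / r with htdef
    have ht : 0 < t := by positivity
    have hbt : b = (1 + w) + t := by rw [hb, htdef]; field_simp; ring
    have h1rt : -(1 - r) * b = -t := by rw [hb, htdef]; ring
    have hfb : (1 - r) * Real.exp (-b) + Real.exp (-(1 - r) * b) < r := by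
      have heb : Real.exp (-b) = w * Real.exp (-t) := by
        rw [hbt, show -((1+w)+t) = -(1+w) + -t by ring, Real.exp_add, hwexp]
      have het : Real.exp (-t) * (1 + t) < 1 := by
        have hlt := Real.add_one_lt_exp (x := t) (ne_of_gt ht)
        have hpos' : 0 < Real.exp (-t) := Real.exp_pos _
        have h3 : Real.exp (-t) * (t + 1) < Real.exp (-t) * Real.exp t :=
          mul_lt_mul_of_pos_left hlt hpos'
        rwa [← Real.exp_add, neg_add_cancel, Real.exp_zero, add_comm t 1] at h3
      have h1t : 1 + t = (1 + (1 - r) * w) / r := by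
        rw [htdef]; field_simp; ring
      rw [heb, h1rt]
      have hkey : Real.exp (-t) * ((1 + (1 - r) * w) / r) < 1 := by rwa [← h1t]
      have h2 : Real.exp (-t) * (1 + (1 - r) * w) < r := by
        have hdiv : Real.exp (-t) * (1 + (1 - r) * w) / r < 1 := by
          rw [mul_div_assoc]; exact hkey
        exact (div_lt_one hr0).mp hdiv
      nlinarith [Real.exp_pos (-t)]
    have h1 : Real.exp (-(h r)) ≤ Real.exp (-b) := Real.exp_le_exp.2 (by linarith)
    have h2 : Real.exp (-(1 - r) * h r) ≤ Real.exp (-(1 - r) * b) :=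
      Real.exp_le_exp.2 (by nlinarith)
    nlinarith
  have hmem : ∀ᶠ r in nhdsWithin 1 (Set.Ioo (0:ℝ) 1), r ∈ Set.Ioo (0:ℝ) 1 :=
    eventually_mem_nhdsWithin
  apply tendsto_of_tendsto_of_tendsto_of_le_of_le' tendsto_const_nhds
  · have hts : Filter.Tendsto (fun r : ℝ => (1 + w) / r) (nhdsWithin 1 (Set.Ioo 0 1))
        (nhds ((1 + w) / 1)) :=
      Filter.Tendsto.mono_left
        (Filter.Tendsto.div tendsto_const_nhds Filter.tendsto_id one_ne_zero) nhdsWithin_le_nhds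
    simpa using hts
  · exact hmem.mono fun r hr => (hlow r hr).le
  · exact hmem.mono fun r hr => (hup r hr).le
end

section
/- Let 0 < r < 1 and define φ(u) := (((1−√r)/2)·u + (1+√r)/2)² for u ∈ ℂ. Then the two points x_r ± i·y_r with x_r = −(1+r)/(1−r) and y_r = 2√r/(1−r) satisfy Re φ(x_r ± i y_r) = 0, and they lie on the boundary of the Bernstein ellipse E_ρ with ρ = (√(1+r) + √(2√r))/(1−√r), i.e., x_r²/A² + y_r²/B² = 1 where A = (ρ+ρ⁻¹)/2 and B = (ρ−ρ⁻¹)/2. -/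
theorem stmt_11 (r : ℝ) (hr0 : 0 < r) (hr1 : r < 1) :
    let φ : ℂ → ℂ := fun u =>
      (((1 - (Real.sqrt r : ℂ)) / 2) * u + (1 + (Real.sqrt r : ℂ)) / 2) ^ 2
    let xr : ℝ := -(1 + r) / (1 - r)
    let yr : ℝ := 2 * Real.sqrt r / (1 - r)
    let ρ : ℝ := (Real.sqrt (1 + r) + Real.sqrt (2 * Real.sqrt r)) / (1 - Real.sqrt r)
    (φ ⟨xr, yr⟩).re = 0 ∧ (φ ⟨xr, -yr⟩).re = 0 ∧
      xr ^ 2 / ((ρ + ρ⁻¹) / 2) ^ 2 + yr ^ 2 / ((ρ - ρ⁻¹) / 2) ^ 2 = 1 := by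
  intro φ xr yr ρ
  set s := Real.sqrt r with hsdef
  have hs2 : s ^ 2 = r := Real.sq_sqrt hr0.le
  have hs0 : 0 < s := Real.sqrt_pos.mpr hr0
  have hs1 : s < 1 := by nlinarith [hs2]
  have hkey : ∀ y : ℝ, ((((1 - (s : ℂ)) / 2) * (⟨xr, y⟩ : ℂ) + (1 + (s : ℂ)) / 2) ^ 2).re
      = ((1-s)/2*xr + (1+s)/2)^2 - ((1-s)/2*y)^2 := by
    intro y
    have h : (((1 - (s : ℂ)) / 2) * (⟨xr, y⟩ : ℂ) + (1 + (s : ℂ)) / 2)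
        = (⟨(1-s)/2*xr + (1+s)/2, (1-s)/2*y⟩ : ℂ) := by
      apply Complex.ext <;>
        simp [Complex.div_re, Complex.div_im, Complex.normSq] <;> ring
    rw [h, sq]
    simp [Complex.mul_re]
    ring
  have hr1s : (1:ℝ) - r ≠ 0 := by linarith
  have h1s : (1:ℝ) - s ≠ 0 := by linarith
  have h1ps : (1:ℝ) + s ≠ 0 := by linarith
  have h1s2 : (1:ℝ) - s ^ 2 ≠ 0 := by rw [hs2]; exact hr1s
  have e1 : (1-s)/2 * xr + (1+s)/2 = s/(1+s) := by
    have hx : xr = -(1 + r) / (1 - r) := rfl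
    rw [hx, ← hs2]
    field_simp
    ring
  have e2 : (1-s)/2 * yr = s/(1+s) := by
    have hyv : yr = 2 * s / (1 - r) := rfl
    rw [hyv, ← hs2]
    field_simp
    ring
  have hre : ∀ y : ℝ, y = yr ∨ y = -yr → (φ ⟨xr, y⟩).re = 0 := by
    intro y hy
    refine (hkey y).trans ?_
    rcases hy with h | h <;> rw [h, e1]
    · rw [e2]; ring
    · have : (1-s)/2 * -yr = -(s/(1+s)) := by rw [← e2]; ring
      rw [this]; ring
  refine ⟨hre yr (Or.inl rfl), hre (-yr) (Or.inr rfl), ?_⟩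
  -- ellipse part
  set p := Real.sqrt (1 + r) with hpdef
  set q := Real.sqrt (2 * s) with hqdef
  have hp2 : p ^ 2 = 1 + r := Real.sq_sqrt (by linarith)
  have hq2 : q ^ 2 = 2 * s := Real.sq_sqrt (by positivity)
  have hp0 : 0 < p := Real.sqrt_pos.mpr (by linarith)
  have hq0 : 0 < q := Real.sqrt_pos.mpr (by positivity)
  have hρ : ρ = (p + q) / (1 - s) := rfl
  have hρinv : ρ⁻¹ = (p - q) / (1 - s) := by
    rw [hρ, inv_div, div_eq_div_iff (by positivity) (by positivity)]
    nlinarith [hp2, hq2, hs2]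
  have hx : xr = -(1 + r) / (1 - r) := rfl
  have hyv : yr = 2 * s / (1 - r) := rfl
  rw [hρ, hρinv, hx, hyv]
  have hA : ((p + q) / (1 - s) + (p - q) / (1 - s)) / 2 = p / (1 - s) := by
    field_simp; ring
  have hB : ((p + q) / (1 - s) - (p - q) / (1 - s)) / 2 = q / (1 - s) := by
    field_simp; ring
  rw [hA, hB]
  field_simp
  rw [hp2, hq2, ← hs2]
  ring
end

section
/- Let 0 < r < 1 and define the rational transformation φ(u) := (2r/(1−r)) / ((1+r)/(1−r) − u). Then the infimum of Re φ(u) over the open Bernstein ellipse E_ρ with ρ = (1+√r)/(1−√r) equals r/(1+r) > 0. -/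
theorem stmt_13 (r : ℝ) (hr0 : 0 < r) (hr1 : r < 1) :
    let ρ : ℝ := (1 + Real.sqrt r) / (1 - Real.sqrt r)
    sInf ((fun z : ℂ =>
        ((2 * (r:ℂ) / (1 - (r:ℂ))) / ((1 + (r:ℂ)) / (1 - (r:ℂ)) - z)).re) ''
        {z : ℂ | z.re ^ 2 / ((ρ + ρ⁻¹) / 2) ^ 2 +
          z.im ^ 2 / ((ρ - ρ⁻¹) / 2) ^ 2 < 1}) = r / (1 + r) ∧
      (0:ℝ) < r / (1 + r) := by
  intro ρ
  have h1r : (0:ℝ) < 1 - r := by linarith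
  have h1r' : (0:ℝ) < 1 + r := by linarith
  refine ⟨?_, by positivity⟩
  set s := Real.sqrt r with hs
  have hs0 : 0 < s := Real.sqrt_pos.mpr hr0
  have hsr : s ^ 2 = r := Real.sq_sqrt hr0.le
  have hs1 : s < 1 := by nlinarith [Real.sqrt_nonneg r]
  have h1s : (0:ℝ) < 1 - s := by linarith
  have h1s' : (0:ℝ) < 1 + s := by linarith
  set a : ℝ := (1 + r) / (1 - r) with ha
  set b : ℝ := 2 * s / (1 - r) with hb
  set c : ℝ := 2 * r / (1 - r) with hc
  have ha0 : 0 < a := by positivity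
  have hb0 : 0 < b := by positivity
  have hc0 : 0 < c := by positivity
  have hba : b ≤ a := by
    rw [ha, hb]
    gcongr
    nlinarith
  have hρa : (ρ + ρ⁻¹) / 2 = a := by
    show ((1+s)/(1-s) + ((1+s)/(1-s))⁻¹) / 2 = a
    rw [inv_div, ha]
    field_simp
    nlinarith
  have hρb : (ρ - ρ⁻¹) / 2 = b := by
    show ((1+s)/(1-s) - ((1+s)/(1-s))⁻¹) / 2 = b
    rw [inv_div, hb]
    field_simp
    nlinarith
  rw [hρa, hρb]
  have hfun : ∀ z : ℂ, ((2 * (r:ℂ) / (1 - (r:ℂ))) / ((1 + (r:ℂ)) / (1 - (r:ℂ)) - z)).re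
      = c * (a - z.re) / ((a - z.re)^2 + z.im^2) := by
    intro z
    have e1 : (2 * (r:ℂ) / (1 - (r:ℂ))) = ((c:ℝ):ℂ) := by rw [hc]; push_cast; ring
    have e2 : ((1 + (r:ℂ)) / (1 - (r:ℂ))) = ((a:ℝ):ℂ) := by rw [ha]; push_cast; ring
    rw [e1, e2, Complex.div_re]
    simp [Complex.normSq_apply]
    ring
  have himg : (fun z : ℂ => ((2 * (r:ℂ) / (1 - (r:ℂ))) / ((1 + (r:ℂ)) / (1 - (r:ℂ)) - z)).re)
      = fun z : ℂ => c * (a - z.re) / ((a - z.re)^2 + z.im^2) := funext hfun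
  rw [himg]
  set S : Set ℂ := {z : ℂ | z.re ^ 2 / a ^ 2 + z.im ^ 2 / b ^ 2 < 1} with hS
  have hm : r / (1 + r) = c / (2 * a) := by rw [hc, ha]; field_simp
  rw [hm]
  clear_value a b c s ρ
  clear hρa hρb hfun himg hs1 hsr hs0 h1s h1s' hs hb hc ha
  have hne : ((fun z : ℂ => c * (a - z.re) / ((a - z.re)^2 + z.im^2)) '' S).Nonempty := by
    refine ⟨_, ⟨0, ?_, rfl⟩⟩
    simp [hS]
  apply IsGLB.csInf_eq ?_ hne
  constructor
  · rintro v ⟨z, hz, rfl⟩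
    simp only [hS, Set.mem_setOf_eq] at hz
    show c / (2*a) ≤ c * (a - z.re) / ((a - z.re)^2 + z.im^2)
    set x := z.re with hx
    set y := z.im with hy
    clear_value x y
    have key : x^2 + y^2 < a^2 := by
      have ha2 : (0:ℝ) < a^2 := by positivity
      have hb2 : (0:ℝ) < b^2 := by positivity
      have hz' : x^2 * b^2 + y^2 * a^2 < a^2 * b^2 := by
        have := mul_lt_mul_of_pos_right hz (by positivity : (0:ℝ) < a^2 * b^2)
        calc x^2 * b^2 + y^2 * a^2
            = (x^2/a^2 + y^2/b^2) * (a^2 * b^2) := by field_simp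
          _ < 1 * (a^2*b^2) := this
          _ = a^2 * b^2 := by ring
      nlinarith [sq_nonneg y, mul_le_mul hba hba hb0.le ha0.le, sq_nonneg x]
    have hax : x < a := by nlinarith [sq_nonneg y]
    have hden : (0:ℝ) < (a - x)^2 + y^2 := by
      have := pow_pos (sub_pos.mpr hax) 2
      nlinarith [sq_nonneg y]
    rw [div_le_div_iff₀ (by positivity) hden]
    have hk : (0:ℝ) < a^2 - x^2 - y^2 := by linarith
    nlinarith [mul_pos hc0 hk]
  · intro l hl
    have hval : ∀ t ∈ Set.Ioo (0:ℝ) 1, l ≤ c / (a * (1 + t)) := by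
      intro t ht
      obtain ⟨ht0, ht1⟩ := ht
      have hmem : ((-(t*a) : ℝ) : ℂ) ∈ S := by
        simp only [hS, Set.mem_setOf_eq, Complex.ofReal_re, Complex.ofReal_im]
        have e : (-(t*a))^2 / a^2 + (0:ℝ)^2 / b^2 = t^2 := by
          field_simp
          ring
        rw [e]
        nlinarith
      have h := hl ⟨_, hmem, rfl⟩
      have e : c * (a - ((-(t*a):ℝ):ℂ).re) / ((a - ((-(t*a):ℝ):ℂ).re)^2 + ((-(t*a):ℝ):ℂ).im^2)
          = c / (a * (1 + t)) := by
        simp only [Complex.ofReal_re, Complex.ofReal_im]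
        have hpos : (0:ℝ) < a * (1 + t) := by positivity
        field_simp
        ring
      exact le_of_le_of_eq h e
    have htend : Filter.Tendsto (fun t : ℝ => c / (a * (1 + t)))
        (nhdsWithin 1 (Set.Iio 1)) (nhds (c / (2 * a))) := by
      have hcont : ContinuousAt (fun t : ℝ => c / (a * (1 + t))) 1 := by
        apply ContinuousAt.div continuousAt_const (by fun_prop)
        positivity
      rw [show c / (2*a) = c / (a*(1+1)) by ring]
      exact hcont.tendsto.mono_left nhdsWithin_le_nhds
    have hev : ∀ᶠ t in nhdsWithin 1 (Set.Iio 1), l ≤ c / (a * (1 + t)) :=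
      Filter.eventually_of_mem (Ioo_mem_nhdsLT_of_mem ⟨zero_lt_one, le_refl 1⟩) hval
    exact ge_of_tendsto htend hev
end

section
/- For any integer n ≥ 1 and any real numbers x₁ < x₂ < ⋯ < x_n and t₁ < t₂ < ⋯ < t_n, the n×n matrix with (i,j) entry e^{x_i·t_j} has strictly positive determinant. -/
open Real Finset

/-!
An exponential sum `∑ cᵢ exp (aᵢ s)` with distinct exponents and `n` terms has fewer than `n`
real zeros unless all coefficients vanish: multiply by `exp (-a₀ s)` and apply Rolle's theorem,
which yields an `(n-1)`-term sum with `n-1` zeros. Hence `det (exp (xᵢ tⱼ))` never vanishes on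
the convex, hence connected, set of increasing vectors `x`, and its sign there is the sign at
`xᵢ = i`, where the matrix is a Vandermonde matrix in `exp tⱼ` with positive determinant.
-/

noncomputable def expSum {ι : Type*} [Fintype ι] (a c : ι → ℝ) (s : ℝ) : ℝ :=
  ∑ i, c i * exp (a i * s)

section
variable {ι : Type*} [Fintype ι]

theorem hasDerivAt_expSum (a c : ι → ℝ) (s : ℝ) :
    HasDerivAt (expSum a c) (expSum a (fun i => c i * a i) s) s := by
  refine HasDerivAt.fun_sum fun i _ => ?_
  exact (((hasDerivAt_id' s).const_mul (a i)).exp.const_mul (c i)).congr_deriv (by ring)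

theorem expSum_sub_const (a c : ι → ℝ) (b s : ℝ) :
    expSum (fun i => a i - b) c s = exp (-(b * s)) * expSum a c s := by
  simp only [expSum, mul_sum]
  refine sum_congr rfl fun i _ => ?_
  rw [mul_left_comm, ← exp_add]
  ring_nf

end

theorem expSum_fin_succ {n : ℕ} (a c : Fin (n + 1) → ℝ) (s : ℝ) :
    expSum a c s =
      c 0 * exp (a 0 * s) + expSum (fun i : Fin n => a i.succ) (fun i => c i.succ) s :=
  Fin.sum_univ_succ _

theorem exists_strictMono_deriv_eq_zero {n : ℕ} {f f' : ℝ → ℝ}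
    (hf : ∀ s, HasDerivAt f (f' s) s) {t : Fin (n + 1) → ℝ} (ht : StrictMono t)
    (hzero : ∀ j, f (t j) = 0) : ∃ s : Fin n → ℝ, StrictMono s ∧ ∀ j, f' (s j) = 0 := by
  have hrolle (j : Fin n) : ∃ s ∈ Set.Ioo (t j.castSucc) (t j.succ), f' s = 0 :=
    exists_hasDerivAt_eq_zero (ht Fin.castSucc_lt_succ)
      (fun s _ => (hf s).continuousAt.continuousWithinAt) (by rw [hzero, hzero])
      (fun s _ => hf s)
  choose s hs hs0 using hrolle
  refine ⟨s, fun j k hjk => ?_, hs0⟩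
  calc s j < t j.succ := (hs j).2
    _ ≤ t k.castSucc := ht.monotone (Fin.le_def.mpr (by simpa using hjk))
    _ < s k := (hs k).1

theorem eq_zero_of_expSum_eq_zero {n : ℕ} {a c t : Fin n → ℝ} (ha : StrictMono a)
    (ht : StrictMono t) (hzero : ∀ j, expSum a c (t j) = 0) : c = 0 := by
  induction n with
  | zero => exact funext fun i => i.elim0
  | succ n ih =>
    set a' : Fin (n + 1) → ℝ := fun i => a i - a 0
    have ha'_pos (i : Fin n) : 0 < a' i.succ := sub_pos.mpr (ha i.succ_pos)
    have hzero' (j) : expSum a' c (t j) = 0 := by rw [expSum_sub_const, hzero, mul_zero]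
    obtain ⟨s, hs, hs0⟩ := exists_strictMono_deriv_eq_zero (hasDerivAt_expSum a' c) ht hzero'
    -- the derivative kills the leading term, since `a' 0 = 0`
    have hcoeff := ih (a := fun i => a' i.succ) (c := fun i => c i.succ * a' i.succ)
      (fun i j hij => sub_lt_sub_right (ha (Fin.succ_lt_succ_iff.mpr hij)) _) hs
      (fun j => by simpa [expSum_fin_succ, a'] using hs0 j)
    have hsucc (i : Fin n) : c i.succ = 0 :=
      (mul_eq_zero.mp (congrFun hcoeff i)).resolve_right (ha'_pos i).ne'
    have h0 : c 0 = 0 := by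
      have h := hzero 0
      rw [expSum_fin_succ] at h
      simp only [expSum, hsucc, zero_mul, sum_const_zero, add_zero] at h
      exact (mul_eq_zero.mp h).resolve_right (exp_ne_zero _)
    exact funext (Fin.cases h0 hsucc)

theorem det_exp_ne_zero {n : ℕ} {x t : Fin n → ℝ} (hx : StrictMono x) (ht : StrictMono t) :
    (Matrix.of fun i j => exp (x i * t j)).det ≠ 0 := by
  intro hdet
  obtain ⟨c, hc, hc0⟩ := Matrix.exists_vecMul_eq_zero_iff.mpr hdet
  exact hc (eq_zero_of_expSum_eq_zero hx ht fun j => congrFun hc0 j)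

theorem det_exp_natCast_pos {n : ℕ} {t : Fin n → ℝ} (ht : StrictMono t) :
    0 < (Matrix.of fun i j : Fin n => exp (((i : ℕ) : ℝ) * t j)).det := by
  have hvandermonde : (Matrix.of fun i j : Fin n => exp (((i : ℕ) : ℝ) * t j)) =
      (Matrix.vandermonde fun j => exp (t j)).transpose := by
    ext i j
    simp [Matrix.vandermonde_apply, exp_nat_mul]
  rw [hvandermonde, Matrix.det_transpose, Matrix.det_vandermonde]
  exact prod_pos fun i _ => prod_pos fun j hj =>
    sub_pos.mpr (exp_lt_exp.mpr (ht (mem_Ioi.mp hj)))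

theorem convex_setOf_strictMono {ι : Type*} [Preorder ι] :
    Convex ℝ {x : ι → ℝ | StrictMono x} := by
  intro x hx y hy a b ha hb hab i j hij
  simp only [Pi.add_apply, Pi.smul_apply, smul_eq_mul]
  rcases ha.eq_or_lt with rfl | ha
  · simpa [(zero_add b).symm.trans hab] using hy hij
  · exact add_lt_add_of_lt_of_le (mul_lt_mul_of_pos_left (hx hij) ha)
      (mul_le_mul_of_nonneg_left (hy hij).le hb)

theorem stmt_16_general (n : ℕ) (x t : Fin n → ℝ)
    (hx : StrictMono x) (ht : StrictMono t) :
    0 < Matrix.det (Matrix.of fun i j => Real.exp (x i * t j)) := by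
  by_contra! hle
  have hcont : Continuous fun y : Fin n → ℝ => (Matrix.of fun i j => exp (y i * t j)).det := by
    fun_prop
  obtain ⟨y, hy, hy0⟩ := convex_setOf_strictMono.isPreconnected.intermediate_value hx
    (Nat.strictMono_cast.comp Fin.val_strictMono) hcont.continuousOn
    ⟨hle, (det_exp_natCast_pos ht).le⟩
  exact det_exp_ne_zero hy ht hy0

theorem stmt_16 (n : ℕ) (hn : 1 ≤ n) (x t : Fin n → ℝ)
    (hx : StrictMono x) (ht : StrictMono t) :
    0 < Matrix.det (Matrix.of fun i j => Real.exp (x i * t j)) :=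
  stmt_16_general n x t hx ht
end

section
/- Let 0 < r < 1, let β₀(z) := (1/π)∫₀^π e^{−z φ(cos θ)} dθ for a continuous strictly increasing φ : [−1,1] → [r,1] with φ(−1) = r, φ(1) = 1, and let W₀(τ) = (π − arccos(φ^{−1}(τ)))/π and V = ∫_r^1 τ²dW₀ − (∫_r^1 τ dW₀)². Then for all x, y ≥ 0: V·x·y·e^{−(x+y)} ≤ β₀(x+y) − β₀(x)·β₀(y) ≤ V·x·y·e^{−r(x+y)}. -/
/-!
Let `μ` be the law of `φ(cos θ)` for `θ` uniform on `[0, π]`: it is the measure of `W₀`, it lives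
on `[r, 1]`, and `β₀(s) = ∫ e^{-sτ} dμ(τ)`. So `β₀(x + y) - β₀(x) β₀(y)` is the covariance of
`e^{-xτ}` and `e^{-yτ}`, and `V` the variance of `τ`. A covariance is half the mean of
`(F σ - F τ) (G σ - G τ)` over two independent samples, so it suffices to compare
`(e^{-xσ} - e^{-xτ}) (e^{-yσ} - e^{-yτ})` with `x y (σ - τ)²` pointwise on `[r, 1]`; this follows
from `(b - a) eᵃ ≤ eᵇ - eᵃ ≤ (b - a) eᵇ`.
-/

open MeasureTheory ProbabilityTheory Real Set

section Covariance

variable {Ω : Type*} [MeasurableSpace Ω] {μ : Measure Ω} [IsProbabilityMeasure μ] {F G : Ω → ℝ}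

lemma integrable_prod_sub_mul_sub (hF : Integrable F μ) (hG : Integrable G μ)
    (hFG : Integrable (fun ω ↦ F ω * G ω) μ) :
    Integrable (fun z : Ω × Ω ↦ (F z.1 - F z.2) * (G z.1 - G z.2)) (μ.prod μ) := by
  have h := (((hFG.comp_fst μ).add (hFG.comp_snd μ)).sub (hF.mul_prod hG)).sub (hG.mul_prod hF)
  exact h.congr (.of_forall fun z ↦ by simp only [Pi.add_apply, Pi.sub_apply]; ring)

lemma integral_prod_sub_mul_sub (hF : Integrable F μ) (hG : Integrable G μ)
    (hFG : Integrable (fun ω ↦ F ω * G ω) μ) :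
    ∫ z, (F z.1 - F z.2) * (G z.1 - G z.2) ∂μ.prod μ =
      2 * (∫ ω, F ω * G ω ∂μ - (∫ ω, F ω ∂μ) * ∫ ω, G ω ∂μ) := by
  have hsplit : (fun z : Ω × Ω ↦ (F z.1 - F z.2) * (G z.1 - G z.2)) =
      fun z ↦ F z.1 * G z.1 + F z.2 * G z.2 - F z.1 * G z.2 - G z.1 * F z.2 := by
    ext z; ring
  rw [hsplit, integral_sub _ (hG.mul_prod hF), integral_sub _ (hF.mul_prod hG),
    integral_add (hFG.comp_fst μ) (hFG.comp_snd μ), integral_fun_fst (fun ω ↦ F ω * G ω),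
    integral_fun_snd (fun ω ↦ F ω * G ω), integral_prod_mul, integral_prod_mul]
  · simp only [probReal_univ, one_smul]; ring
  · exact (hFG.comp_fst μ).add (hFG.comp_snd μ)
  · exact ((hFG.comp_fst μ).add (hFG.comp_snd μ)).sub (hF.mul_prod hG)

lemma integral_mul_sub_mul_integral_le {F₁ G₁ F₂ G₂ : Ω → ℝ} {s : Set Ω}
    (hs : ∀ᵐ ω ∂μ, ω ∈ s) (hF₁ : Integrable F₁ μ) (hG₁ : Integrable G₁ μ)
    (hF₁G₁ : Integrable (fun ω ↦ F₁ ω * G₁ ω) μ) (hF₂ : Integrable F₂ μ)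
    (hG₂ : Integrable G₂ μ) (hF₂G₂ : Integrable (fun ω ↦ F₂ ω * G₂ ω) μ)
    (h : ∀ σ ∈ s, ∀ τ ∈ s, (F₁ σ - F₁ τ) * (G₁ σ - G₁ τ) ≤ (F₂ σ - F₂ τ) * (G₂ σ - G₂ τ)) :
    ∫ ω, F₁ ω * G₁ ω ∂μ - (∫ ω, F₁ ω ∂μ) * ∫ ω, G₁ ω ∂μ ≤
      ∫ ω, F₂ ω * G₂ ω ∂μ - (∫ ω, F₂ ω ∂μ) * ∫ ω, G₂ ω ∂μ := by
  have hs₂ : ∀ᵐ z ∂μ.prod μ, z.1 ∈ s ∧ z.2 ∈ s :=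
    (Measure.quasiMeasurePreserving_fst.ae hs).and (Measure.quasiMeasurePreserving_snd.ae hs)
  have hmono := integral_mono_ae (integrable_prod_sub_mul_sub hF₁ hG₁ hF₁G₁)
    (integrable_prod_sub_mul_sub hF₂ hG₂ hF₂G₂) (hs₂.mono fun z hz ↦ h _ hz.1 _ hz.2)
  rw [integral_prod_sub_mul_sub hF₁ hG₁ hF₁G₁, integral_prod_sub_mul_sub hF₂ hG₂ hF₂G₂] at hmono
  linarith

end Covariance

lemma sub_mul_exp_le_exp_sub_exp (a b : ℝ) : (b - a) * exp a ≤ exp b - exp a := by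
  have h := add_one_le_exp (b - a)
  rw [exp_sub] at h
  have := exp_pos a
  rw [le_div_iff₀ this] at h
  linarith

lemma exp_sub_exp_le_sub_mul_exp (a b : ℝ) : exp b - exp a ≤ (b - a) * exp b := by
  linarith [sub_mul_exp_le_exp_sub_exp b a]

lemma exp_neg_mul_sub_exp_neg_mul_bounds {a b x σ τ : ℝ} (hx : 0 ≤ x) (hσ : a ≤ σ) (hστ : σ ≤ τ)
    (hτ : τ ≤ b) :
    x * (τ - σ) * exp (-x * b) ≤ exp (-x * σ) - exp (-x * τ) ∧
      exp (-x * σ) - exp (-x * τ) ≤ x * (τ - σ) * exp (-x * a) := by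
  have hd : 0 ≤ x * (τ - σ) := mul_nonneg hx (sub_nonneg.2 hστ)
  constructor
  · calc x * (τ - σ) * exp (-x * b) ≤ x * (τ - σ) * exp (-x * τ) :=
          mul_le_mul_of_nonneg_left (exp_le_exp.2 (by nlinarith)) hd
      _ = (-x * σ - -x * τ) * exp (-x * τ) := by ring
      _ ≤ _ := sub_mul_exp_le_exp_sub_exp _ _
  · calc exp (-x * σ) - exp (-x * τ) ≤ (-x * σ - -x * τ) * exp (-x * σ) :=
          exp_sub_exp_le_sub_mul_exp _ _
      _ = x * (τ - σ) * exp (-x * σ) := by ring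
      _ ≤ _ := mul_le_mul_of_nonneg_left (exp_le_exp.2 (by nlinarith)) hd

lemma exp_neg_mul_sub_mul_exp_neg_mul_sub_bounds {a b x y σ τ : ℝ} (hx : 0 ≤ x) (hy : 0 ≤ y)
    (hσ : σ ∈ Icc a b) (hτ : τ ∈ Icc a b) :
    x * y * exp (-b * (x + y)) * (σ - τ) ^ 2 ≤
        (exp (-x * σ) - exp (-x * τ)) * (exp (-y * σ) - exp (-y * τ)) ∧
      (exp (-x * σ) - exp (-x * τ)) * (exp (-y * σ) - exp (-y * τ)) ≤
        x * y * exp (-a * (x + y)) * (σ - τ) ^ 2 := by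
  wlog hστ : σ ≤ τ generalizing σ τ
  · have h := this hτ hσ (le_of_not_ge hστ)
    constructor <;> nlinarith [h.1, h.2]
  obtain ⟨hx₁, hx₂⟩ := exp_neg_mul_sub_exp_neg_mul_bounds hx hσ.1 hστ hτ.2
  obtain ⟨hy₁, hy₂⟩ := exp_neg_mul_sub_exp_neg_mul_bounds hy hσ.1 hστ hτ.2
  have hd : 0 ≤ τ - σ := sub_nonneg.2 hστ
  have hexp (c : ℝ) : exp (-c * (x + y)) = exp (-x * c) * exp (-y * c) := by
    rw [← exp_add]; ring_nf
  constructor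
  · calc x * y * exp (-b * (x + y)) * (σ - τ) ^ 2
          = x * (τ - σ) * exp (-x * b) * (y * (τ - σ) * exp (-y * b)) := by rw [hexp]; ring
      _ ≤ _ := mul_le_mul hx₁ hy₁ (by positivity) (le_trans (by positivity) hx₁)
  · calc _ ≤ x * (τ - σ) * exp (-x * a) * (y * (τ - σ) * exp (-y * a)) :=
          mul_le_mul hx₂ hy₂ (le_trans (by positivity) hy₁) (by positivity)
      _ = x * y * exp (-a * (x + y)) * (σ - τ) ^ 2 := by rw [hexp]; ring

lemma integral_const_mul_id_mul_sub {μ : Measure ℝ} (c : ℝ) :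
    ∫ τ, c * τ * τ ∂μ - (∫ τ, c * τ ∂μ) * ∫ τ, τ ∂μ =
      c * (∫ τ, τ ^ 2 ∂μ - (∫ τ, τ ∂μ) ^ 2) := by
  have hsq : ∫ τ, c * τ * τ ∂μ = c * ∫ τ, τ ^ 2 ∂μ := by
    simp_rw [mul_assoc, ← pow_two]
    exact integral_const_mul c _
  rw [hsq, integral_const_mul c fun τ ↦ τ]
  ring

theorem variance_mul_exp_le_integral_exp_sub {μ : Measure ℝ} [IsProbabilityMeasure μ]
    {a b x y : ℝ} (hμ : ∀ᵐ τ ∂μ, τ ∈ Icc a b) (hx : 0 ≤ x) (hy : 0 ≤ y) :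
    (∫ τ, τ ^ 2 ∂μ - (∫ τ, τ ∂μ) ^ 2) * x * y * exp (-b * (x + y)) ≤
        ∫ τ, exp (-(x + y) * τ) ∂μ - (∫ τ, exp (-x * τ) ∂μ) * ∫ τ, exp (-y * τ) ∂μ ∧
      ∫ τ, exp (-(x + y) * τ) ∂μ - (∫ τ, exp (-x * τ) ∂μ) * ∫ τ, exp (-y * τ) ∂μ ≤
        (∫ τ, τ ^ 2 ∂μ - (∫ τ, τ ∂μ) ^ 2) * x * y * exp (-a * (x + y)) := by
  have hint {f : ℝ → ℝ} (hf : Continuous f) : Integrable f μ := by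
    rw [← Measure.restrict_eq_self_of_ae_mem hμ]
    exact hf.continuousOn.integrableOn_compact isCompact_Icc
  have hexp (s : ℝ) : Integrable (fun τ ↦ exp (-s * τ)) μ := hint (by fun_prop)
  have hlin (c : ℝ) : Integrable (fun τ ↦ c * τ) μ := hint (by fun_prop)
  have hid : Integrable (fun τ ↦ τ) μ := hint continuous_id
  have hquad (c : ℝ) : Integrable (fun τ ↦ c * τ * τ) μ := hint (by fun_prop)
  have hexp_add : ∫ τ, exp (-(x + y) * τ) ∂μ = ∫ τ, exp (-x * τ) * exp (-y * τ) ∂μ := by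
    simp only [← exp_add]; ring_nf
  have hexp_mul : Integrable (fun τ ↦ exp (-x * τ) * exp (-y * τ)) μ := hint (by fun_prop)
  rw [hexp_add]
  constructor
  · have h := integral_mul_sub_mul_integral_le hμ (hlin (x * y * exp (-b * (x + y))))
      hid (hquad _) (hexp x) (hexp y) hexp_mul fun σ hσ τ hτ ↦ by
        linarith [(exp_neg_mul_sub_mul_exp_neg_mul_sub_bounds hx hy hσ hτ).1]
    rw [integral_const_mul_id_mul_sub] at h
    linarith
  · have h := integral_mul_sub_mul_integral_le hμ (hexp x) (hexp y) hexp_mul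
      (hlin (x * y * exp (-a * (x + y)))) hid (hquad _) fun σ hσ τ hτ ↦ by
        linarith [(exp_neg_mul_sub_mul_exp_neg_mul_sub_bounds hx hy hσ hτ).2]
    rw [integral_const_mul_id_mul_sub] at h
    linarith

instance : IsProbabilityMeasure (volume[|Icc (0 : ℝ) π]) :=
  cond_isProbabilityMeasure_of_finite (by simp [pi_pos]) (by simp)

lemma integral_cond_Icc {a b : ℝ} (hab : a ≤ b) (f : ℝ → ℝ) :
    ∫ x, f x ∂volume[|Icc a b] = (b - a)⁻¹ * ∫ x in a..b, f x := by
  rw [ProbabilityTheory.cond, integral_smul_measure, integral_Icc_eq_integral_Ioc,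
    ← intervalIntegral.integral_of_le hab, Real.volume_Icc, ENNReal.toReal_inv,
    ENNReal.toReal_ofReal (sub_nonneg.2 hab), smul_eq_mul]

lemma measureReal_cond_Icc {a b : ℝ} (hab : a ≤ b) (s : Set ℝ) :
    (volume[|Icc a b]).real s = (b - a)⁻¹ * volume.real (Icc a b ∩ s) := by
  rw [measureReal_def, cond_apply measurableSet_Icc, ENNReal.toReal_mul, ENNReal.toReal_inv,
    Real.volume_Icc, ENNReal.toReal_ofReal (sub_nonneg.2 hab), measureReal_def]

section CompCos

variable {φ : ℝ → ℝ}

lemma continuous_comp_cos (hφ : ContinuousOn φ (Icc (-1) 1)) : Continuous fun θ ↦ φ (cos θ) :=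
  hφ.comp_continuous continuous_cos fun θ ↦ ⟨neg_one_le_cos θ, cos_le_one θ⟩

lemma comp_cos_mem_Icc (hφ : StrictMonoOn φ (Icc (-1) 1)) (θ : ℝ) :
    φ (cos θ) ∈ Icc (φ (-1)) (φ 1) := by
  have hcos : cos θ ∈ Icc (-1 : ℝ) 1 := ⟨neg_one_le_cos θ, cos_le_one θ⟩
  exact ⟨hφ.monotoneOn (by norm_num) hcos hcos.1, hφ.monotoneOn hcos (by norm_num) hcos.2⟩

lemma Icc_inter_preimage_comp_cos_Iic (hφ : StrictMonoOn φ (Icc (-1) 1)) {c : ℝ}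
    (hc : c ∈ Icc (-1) 1) :
    Icc 0 π ∩ (fun θ ↦ φ (cos θ)) ⁻¹' Iic (φ c) = Icc (arccos c) π := by
  ext θ
  simp only [mem_inter_iff, mem_preimage, mem_Iic]
  constructor
  · rintro ⟨hθ, hle⟩
    rw [hφ.le_iff_le ⟨neg_one_le_cos θ, cos_le_one θ⟩ hc, ← cos_arccos hc.1 hc.2,
      strictAntiOn_cos.le_iff_ge hθ ⟨arccos_nonneg c, arccos_le_pi c⟩] at hle
    exact ⟨hle, hθ.2⟩
  · rintro ⟨hle, hθπ⟩
    have hθ : θ ∈ Icc 0 π := ⟨(arccos_nonneg c).trans hle, hθπ⟩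
    refine ⟨hθ, ?_⟩
    rw [hφ.le_iff_le ⟨neg_one_le_cos θ, cos_le_one θ⟩ hc, ← cos_arccos hc.1 hc.2,
      strictAntiOn_cos.le_iff_ge hθ ⟨arccos_nonneg c, arccos_le_pi c⟩]
    exact hle

end CompCos

lemma StieltjesFunction.measure_eq_map_comp_cos {r : ℝ} {φ ψ : ℝ → ℝ}
    (hφc : ContinuousOn φ (Icc (-1) 1)) (hφm : StrictMonoOn φ (Icc (-1) 1))
    (hφm1 : φ (-1) = r) (hφ1 : φ 1 = 1) (hψmem : ∀ τ ∈ Icc r 1, ψ τ ∈ Icc (-1 : ℝ) 1)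
    (hψφ : ∀ τ ∈ Icc r 1, φ (ψ τ) = τ) (w : StieltjesFunction ℝ)
    (hw : ∀ τ ∈ Icc r 1, w τ = (π - arccos (ψ τ)) / π)
    (hw0 : ∀ τ ≤ r, w τ = 0) (hw1 : ∀ τ : ℝ, 1 ≤ τ → w τ = 1) :
    w.measure = (volume[|Icc 0 π]).map (fun θ ↦ φ (cos θ)) := by
  have hg := continuous_comp_cos hφc
  have hg_mem (θ : ℝ) : φ (cos θ) ∈ Icc r 1 := by
    simpa only [hφm1, hφ1] using comp_cos_mem_Icc hφm θ
  have := Measure.isProbabilityMeasure_map (μ := volume[|Icc 0 π]) hg.aemeasurable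
  rw [← measure_cdf ((volume[|Icc 0 π]).map fun θ ↦ φ (cos θ))]
  congr 1
  ext t
  rw [cdf_eq_real, map_measureReal_apply hg.measurable measurableSet_Iic,
    measureReal_cond_Icc pi_pos.le, sub_zero]
  rcases lt_or_ge t r with htr | htr
  · have hempty : Icc 0 π ∩ (fun θ ↦ φ (cos θ)) ⁻¹' Iic t = ∅ :=
      eq_empty_of_forall_notMem fun θ hθ ↦ (hθ.2.trans_lt htr).not_ge (hg_mem θ).1
    rw [hempty, hw0 t htr.le, measureReal_empty, mul_zero]
  rcases le_or_gt t 1 with ht1 | ht1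
  · have ht : t ∈ Icc r 1 := ⟨htr, ht1⟩
    have hIic : Iic t = Iic (φ (ψ t)) := by rw [hψφ t ht]
    rw [hIic, Icc_inter_preimage_comp_cos_Iic hφm (hψmem t ht),
      volume_real_Icc_of_le (arccos_le_pi _), hw t ht, div_eq_inv_mul]
  · have hall : Icc 0 π ∩ (fun θ ↦ φ (cos θ)) ⁻¹' Iic t = Icc 0 π :=
      inter_eq_left.2 fun θ _ ↦ (hg_mem θ).2.trans ht1.le
    rw [hall, hw1 t ht1.le, volume_real_Icc_of_le pi_pos.le, sub_zero,
      inv_mul_cancel₀ pi_pos.ne']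

theorem stmt_17_general (r : ℝ) (φ ψ : ℝ → ℝ)
    (hφc : ContinuousOn φ (Set.Icc (-1) 1)) (hφm : StrictMonoOn φ (Set.Icc (-1) 1))
    (hφm1 : φ (-1) = r) (hφ1 : φ 1 = 1)
    (hψmem : ∀ τ ∈ Set.Icc r 1, ψ τ ∈ Set.Icc (-1:ℝ) 1)
    (hψφ : ∀ τ ∈ Set.Icc r 1, φ (ψ τ) = τ)
    (w : StieltjesFunction ℝ)
    (hw : ∀ τ ∈ Set.Icc r 1, w τ = (Real.pi - Real.arccos (ψ τ)) / Real.pi)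
    (hw0 : ∀ τ ≤ r, w τ = 0) (hw1 : ∀ τ : ℝ, 1 ≤ τ → w τ = 1) :
    ∀ x y : ℝ, 0 ≤ x → 0 ≤ y →
      let β := fun s : ℝ =>
        (1 / Real.pi) * ∫ θ in (0:ℝ)..Real.pi, Real.exp (-s * φ (Real.cos θ))
      let V := (∫ τ in Set.Icc r 1, τ ^ 2 ∂w.measure) -
        (∫ τ in Set.Icc r 1, τ ∂w.measure) ^ 2
      V * x * y * Real.exp (-(x + y)) ≤ β (x + y) - β x * β y ∧
      β (x + y) - β x * β y ≤ V * x * y * Real.exp (-r * (x + y)) := by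
  intro x y hx hy β V
  have hμ := w.measure_eq_map_comp_cos hφc hφm hφm1 hφ1 hψmem hψφ hw hw0 hw1
  have hg := continuous_comp_cos hφc
  have : IsProbabilityMeasure w.measure := hμ ▸ Measure.isProbabilityMeasure_map hg.aemeasurable
  have hsupp : ∀ᵐ τ ∂w.measure, τ ∈ Icc r 1 := by
    rw [hμ]
    exact (ae_map_iff hg.aemeasurable measurableSet_Icc).2 <| .of_forall fun θ ↦ by
      simpa only [hφm1, hφ1, mem_Icc] using comp_cos_mem_Icc hφm θ
  have hβ (s : ℝ) : β s = ∫ τ, exp (-s * τ) ∂w.measure := by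
    rw [hμ, integral_map hg.aemeasurable (by fun_prop), integral_cond_Icc pi_pos.le, sub_zero]
    simp only [β, one_div]
  have hV : V = ∫ τ, τ ^ 2 ∂w.measure - (∫ τ, τ ∂w.measure) ^ 2 := by
    simp only [V, Measure.restrict_eq_self_of_ae_mem hsupp]
  rw [hβ, hβ, hβ, hV]
  simpa only [neg_one_mul] using variance_mul_exp_le_integral_exp_sub hsupp hx hy

theorem stmt_17 (r : ℝ) (hr0 : 0 < r) (hr1 : r < 1) (φ ψ : ℝ → ℝ)
    (hφc : ContinuousOn φ (Set.Icc (-1) 1)) (hφm : StrictMonoOn φ (Set.Icc (-1) 1))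
    (hφm1 : φ (-1) = r) (hφ1 : φ 1 = 1)
    (hψmem : ∀ τ ∈ Set.Icc r 1, ψ τ ∈ Set.Icc (-1:ℝ) 1)
    (hψφ : ∀ τ ∈ Set.Icc r 1, φ (ψ τ) = τ)
    (w : StieltjesFunction ℝ)
    (hw : ∀ τ ∈ Set.Icc r 1, w τ = (Real.pi - Real.arccos (ψ τ)) / Real.pi)
    (hw0 : ∀ τ ≤ r, w τ = 0) (hw1 : ∀ τ : ℝ, 1 ≤ τ → w τ = 1) :
    ∀ x y : ℝ, 0 ≤ x → 0 ≤ y →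
      let β := fun s : ℝ =>
        (1 / Real.pi) * ∫ θ in (0:ℝ)..Real.pi, Real.exp (-s * φ (Real.cos θ))
      let V := (∫ τ in Set.Icc r 1, τ ^ 2 ∂w.measure) -
        (∫ τ in Set.Icc r 1, τ ∂w.measure) ^ 2
      V * x * y * Real.exp (-(x + y)) ≤ β (x + y) - β x * β y ∧
      β (x + y) - β x * β y ≤ V * x * y * Real.exp (-r * (x + y)) :=
  stmt_17_general r φ ψ hφc hφm hφm1 hφ1 hψmem hψφ w hw hw0 hw1
end

section
/- Let 0 < r < 1, let W₀ be a CDF on [r,1] (continuous, strictly increasing, W₀(r)=0, W₀(1)=1), and let β₀(x) = ∫_r^1 e^{−xτ}dW₀(τ). Then for all x, y ≥ 0: β₀(x+y) − β₀(x)·β₀(y) ≤ (e^{−rx} − e^{−x})·(e^{−ry} − e^{−y})/4. -/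
/-!
Under the probability measure `μ = dW₀` restricted to `[r, 1]`, the left-hand side is the
covariance of `τ ↦ e^{-xτ}` and `τ ↦ e^{-yτ}`, which take values in intervals of lengths
`α = e^{-rx} - e^{-x}` and `β = e^{-ry} - e^{-y}`. The bound is then Grüss' inequality: after
shifting to `X ∈ [0, α]`, `Y ∈ [0, β]`, one has `E[XY] ≤ β E[X]` and `E[XY] ≤ α E[Y]`, and the two
resulting bounds `E[X] (β - E[Y])`, `E[Y] (α - E[X])` on the covariance have product
`E[X] (α - E[X]) · E[Y] (β - E[Y]) ≤ (αβ/4)²`.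
-/

open MeasureTheory ProbabilityTheory Set

lemma le_of_le_of_le_of_mul_le_sq {c p q s : ℝ} (hs : 0 ≤ s) (hp : c ≤ p) (hq : c ≤ q)
    (hpq : p * q ≤ s ^ 2) : c ≤ s := by
  by_contra! h
  nlinarith [mul_le_mul hp hq (by linarith) (by linarith)]

section Gruss

variable {Ω : Type*} {mΩ : MeasurableSpace Ω} {μ : Measure Ω} [IsProbabilityMeasure μ]
  {X Y : Ω → ℝ}

theorem covariance_le_of_mem_Icc_zero {α β : ℝ} (hX : ∀ᵐ ω ∂μ, X ω ∈ Icc 0 α)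
    (hY : ∀ᵐ ω ∂μ, Y ω ∈ Icc 0 β) (hXm : AEStronglyMeasurable X μ)
    (hYm : AEStronglyMeasurable Y μ) : cov[X, Y; μ] ≤ α * β / 4 := by
  have hX2 := memLp_of_bounded hX hXm 2
  have hY2 := memLp_of_bounded hY hYm 2
  have hXi : Integrable X μ := hX2.integrable one_le_two
  have hYi : Integrable Y μ := hY2.integrable one_le_two
  have hα : 0 ≤ α := by obtain ⟨ω, hω⟩ := hX.exists; exact hω.1.trans hω.2
  have hβ : 0 ≤ β := by obtain ⟨ω, hω⟩ := hY.exists; exact hω.1.trans hω.2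
  have hu : μ[X] ∈ Icc 0 α := by
    refine ⟨integral_nonneg_of_ae (hX.mono fun ω h ↦ h.1), ?_⟩
    simpa using integral_mono_ae hXi (integrable_const α) (hX.mono fun ω h ↦ h.2)
  have hv : μ[Y] ∈ Icc 0 β := by
    refine ⟨integral_nonneg_of_ae (hY.mono fun ω h ↦ h.1), ?_⟩
    simpa using integral_mono_ae hYi (integrable_const β) (hY.mono fun ω h ↦ h.2)
  have hXY_le_left : μ[X * Y] ≤ β * μ[X] := by
    rw [← integral_const_mul]
    refine integral_mono_ae (hX2.integrable_mul hY2) (hXi.const_mul β) ?_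
    filter_upwards [hX, hY] with ω hXω hYω
    simpa [mul_comm β] using mul_le_mul_of_nonneg_left hYω.2 hXω.1
  have hXY_le_right : μ[X * Y] ≤ α * μ[Y] := by
    rw [← integral_const_mul]
    refine integral_mono_ae (hX2.integrable_mul hY2) (hYi.const_mul α) ?_
    filter_upwards [hX, hY] with ω hXω hYω
    simpa using mul_le_mul_of_nonneg_right hXω.2 hYω.1
  rw [covariance_eq_sub hX2 hY2]
  refine le_of_le_of_le_of_mul_le_sq (by positivity)
    (p := μ[X] * (β - μ[Y])) (q := μ[Y] * (α - μ[X])) (by linarith) (by linarith) ?_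
  calc μ[X] * (β - μ[Y]) * (μ[Y] * (α - μ[X]))
      = (4 * μ[X] * (α - μ[X])) * (4 * μ[Y] * (β - μ[Y])) / 16 := by ring
    _ ≤ (μ[X] + (α - μ[X])) ^ 2 * (μ[Y] + (β - μ[Y])) ^ 2 / 16 := by
      gcongr
      · exact mul_nonneg (by linarith [hv.1]) (sub_nonneg.2 hv.2)
      all_goals exact four_mul_le_sq_add _ _
    _ = (α * β / 4) ^ 2 := by ring

/-- Grüss' inequality (upper half). -/
theorem covariance_le_of_mem_Icc {a b c d : ℝ} (hX : ∀ᵐ ω ∂μ, X ω ∈ Icc a b)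
    (hY : ∀ᵐ ω ∂μ, Y ω ∈ Icc c d) (hXm : AEStronglyMeasurable X μ)
    (hYm : AEStronglyMeasurable Y μ) : cov[X, Y; μ] ≤ (b - a) * (d - c) / 4 := by
  rw [← covariance_sub_const_left ((memLp_of_bounded hX hXm 1).integrable le_rfl) a,
    ← covariance_sub_const_right ((memLp_of_bounded hY hYm 1).integrable le_rfl) c]
  refine covariance_le_of_mem_Icc_zero ?_ ?_ (by fun_prop) (by fun_prop)
  · filter_upwards [hX] with ω h using ⟨sub_nonneg.2 h.1, sub_le_sub_right h.2 a⟩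
  · filter_upwards [hY] with ω h using ⟨sub_nonneg.2 h.1, sub_le_sub_right h.2 c⟩

end Gruss

theorem StieltjesFunction.isProbabilityMeasure_restrict_Icc {w : StieltjesFunction ℝ} {a b : ℝ}
    (hw : ContinuousWithinAt w (Iic a) a) (ha : w a = 0) (hb : w b = 1) :
    IsProbabilityMeasure (w.measure.restrict (Icc a b)) :=
  ⟨by simp [w.measure_Icc, hw.leftLim_eq, ha, hb]⟩

lemma Real.exp_neg_mul_mem_Icc {r x τ : ℝ} (hx : 0 ≤ x) (hτ : τ ∈ Icc r 1) :
    Real.exp (-x * τ) ∈ Icc (Real.exp (-x)) (Real.exp (-r * x)) := by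
  constructor <;> rw [Real.exp_le_exp] <;> nlinarith [hτ.1, hτ.2]

theorem stmt_18_general (r : ℝ) (w : StieltjesFunction ℝ)
    (hwc : Continuous w)
    (hwr : w r = 0) (hw1 : w 1 = 1) :
    ∀ x y : ℝ, 0 ≤ x → 0 ≤ y →
      (∫ τ in Set.Icc r 1, Real.exp (-(x + y) * τ) ∂w.measure) -
          (∫ τ in Set.Icc r 1, Real.exp (-x * τ) ∂w.measure) *
            (∫ τ in Set.Icc r 1, Real.exp (-y * τ) ∂w.measure) ≤
        (Real.exp (-r * x) - Real.exp (-x)) *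
          (Real.exp (-r * y) - Real.exp (-y)) / 4 := by
  intro x y hx hy
  have := w.isProbabilityMeasure_restrict_Icc hwc.continuousWithinAt hwr hw1
  have hmem (s : ℝ) (hs : 0 ≤ s) : ∀ᵐ τ ∂w.measure.restrict (Icc r 1),
      Real.exp (-s * τ) ∈ Icc (Real.exp (-s)) (Real.exp (-r * s)) :=
    (ae_restrict_mem measurableSet_Icc).mono fun τ hτ ↦ Real.exp_neg_mul_mem_Icc hs hτ
  have hmeas (s : ℝ) :
      AEStronglyMeasurable (fun τ ↦ Real.exp (-s * τ)) (w.measure.restrict (Icc r 1)) :=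
    (by fun_prop : Continuous fun τ ↦ Real.exp (-s * τ)).aestronglyMeasurable
  have hcov := covariance_eq_sub (memLp_of_bounded (hmem x hx) (hmeas x) 2)
    (memLp_of_bounded (hmem y hy) (hmeas y) 2)
  simp only [Pi.mul_apply, ← Real.exp_add, ← add_mul] at hcov
  rw [neg_add, ← hcov]
  exact covariance_le_of_mem_Icc (hmem x hx) (hmem y hy) (hmeas x) (hmeas y)

theorem stmt_18 (r : ℝ) (hr0 : 0 < r) (hr1 : r < 1) (w : StieltjesFunction ℝ)
    (hwc : Continuous w) (hwm : StrictMonoOn w (Set.Icc r 1))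
    (hwr : w r = 0) (hw1 : w 1 = 1) :
    ∀ x y : ℝ, 0 ≤ x → 0 ≤ y →
      (∫ τ in Set.Icc r 1, Real.exp (-(x + y) * τ) ∂w.measure) -
          (∫ τ in Set.Icc r 1, Real.exp (-x * τ) ∂w.measure) *
            (∫ τ in Set.Icc r 1, Real.exp (-y * τ) ∂w.measure) ≤
        (Real.exp (-r * x) - Real.exp (-x)) *
          (Real.exp (-r * y) - Real.exp (-y)) / 4 :=
  stmt_18_general r w hwc hwr hw1
end
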